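/- arXiv:2604.19619 — 2 statements merged into one kernel-verified Lean document; each statement's English description precedes it below -/
import Mathlib

section
/- Let ∅ ≠ Ω ⊆ ℝ^d × ℝ^d, σ > 0, 0 < ρ ≤ 1 and 0 < ε < γ. Then there exists μ₀ > 0 such that for every 0 < μ ≤ μ₀ one has the inclusion of anisotropic neighborhoods (Ω_{ρ,ε})_{ρ,μ} ⊆ Ω_{ρ,γ}. -/
open scoped Real

variable {d : ℕ}

/-- The anisotropic weight `θ_σ(x,ξ) = 1 + ‖x‖ + ‖ξ‖^{1/σ}`. -/
noncomputable def theta (d : ℕ) (σ : ℝ)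
    (z : EuclideanSpace ℝ (Fin d) × EuclideanSpace ℝ (Fin d)) : ℝ :=
  1 + ‖z.1‖ + ‖z.2‖ ^ (1 / σ)

/-- The anisotropic neighborhood `Ω_{ρ,ε}` (with anisotropy parameter `σ`). -/
noncomputable def aniso (d : ℕ) (σ ρ ε : ℝ)
    (Ω : Set (EuclideanSpace ℝ (Fin d) × EuclideanSpace ℝ (Fin d))) :
    Set (EuclideanSpace ℝ (Fin d) × EuclideanSpace ℝ (Fin d)) :=
  {z | ∃ w ∈ Ω, ‖z.1 - w.1‖ < ε * theta d σ w ^ ρ ∧ ‖z.2 - w.2‖ < ε * theta d σ w ^ (ρ * σ)}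

/-- The constant `C_τ` in the quasi-triangle inequality. -/
noncomputable def Cq (τ : ℝ) : ℝ := if 1 ≤ τ then 1 else 2 ^ (1 / τ - 1)

/-- Euclidean norm of a pair. -/
noncomputable def pairNorm (z : EuclideanSpace ℝ (Fin d) × EuclideanSpace ℝ (Fin d)) : ℝ :=
  Real.sqrt (‖z.1‖ ^ 2 + ‖z.2‖ ^ 2)

/-- The bracket `⟨z⟩ = (1 + ‖z‖²)^{1/2}` for a pair (Euclidean norm). -/
noncomputable def pairBracket (z : EuclideanSpace ℝ (Fin d) × EuclideanSpace ℝ (Fin d)) : ℝ :=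
  Real.sqrt (1 + (‖z.1‖ ^ 2 + ‖z.2‖ ^ 2))

/-- Directional derivative. -/
noncomputable def dirDeriv {V F : Type*} [NormedAddCommGroup V] [NormedSpace ℝ V]
    [NormedAddCommGroup F] [NormedSpace ℝ F] (v : V) (f : V → F) : V → F :=
  fun x => fderiv ℝ f x v

/-- Iterated directional derivative along a list of directions. -/
noncomputable def listDeriv {V F : Type*} [NormedAddCommGroup V] [NormedSpace ℝ V]
    [NormedAddCommGroup F] [NormedSpace ℝ F] : List V → (V → F) → (V → F)
  | [], f => f
  | v :: vs, f => dirDeriv v (listDeriv vs f)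

/-- The directions realizing the partial derivative `∂_x^α ∂_ξ^β`. -/
noncomputable def mdirs (d : ℕ) (α β : Fin d → ℕ) :
    List (EuclideanSpace ℝ (Fin d) × EuclideanSpace ℝ (Fin d)) :=
  ((List.finRange d).flatMap fun i =>
      List.replicate (α i) ((EuclideanSpace.single i (1 : ℝ), 0))) ++
  ((List.finRange d).flatMap fun i =>
      List.replicate (β i) ((0, EuclideanSpace.single i (1 : ℝ))))

/-- Membership in the anisotropic Shubin symbol class `G_ρ^{r,σ}`. -/
def ShubinG {F : Type*} [NormedAddCommGroup F] [NormedSpace ℝ F]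
    (d : ℕ) (ρ r σ : ℝ)
    (a : EuclideanSpace ℝ (Fin d) × EuclideanSpace ℝ (Fin d) → F) : Prop :=
  ContDiff ℝ (⊤ : ℕ∞) a ∧
    ∀ α β : Fin d → ℕ, ∃ C > 0, ∀ z,
      ‖listDeriv (mdirs d α β) a z‖ ≤
        C * theta d σ z ^ (r - ρ * ((∑ i, (α i : ℝ)) + σ * ∑ i, (β i : ℝ)))

/-- `a` is elliptic in `Γ` (order `r`, parameter `σ`). -/
def EllipticIn (d : ℕ) (σ r : ℝ)
    (a : EuclideanSpace ℝ (Fin d) × EuclideanSpace ℝ (Fin d) → ℂ)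
    (Γ : Set (EuclideanSpace ℝ (Fin d) × EuclideanSpace ℝ (Fin d))) : Prop :=
  ∃ C > 0, ∃ R > 0, ∀ z ∈ Γ, R ≤ pairNorm z → C * theta d σ z ^ r ≤ ‖a z‖

/-- `V` is the short-time Fourier transform `V_φ u`. -/
def IsSTFT (d : ℕ) (φ : SchwartzMap (EuclideanSpace ℝ (Fin d)) ℂ)
    (u : SchwartzMap (EuclideanSpace ℝ (Fin d)) ℂ →L[ℝ] ℂ)
    (V : EuclideanSpace ℝ (Fin d) × EuclideanSpace ℝ (Fin d) → ℂ) : Prop :=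
  ∀ x ξ : EuclideanSpace ℝ (Fin d), ∃ g : SchwartzMap (EuclideanSpace ℝ (Fin d)) ℂ,
    (∀ y, g y = Complex.exp (-(Complex.I * ((inner ℝ y ξ : ℝ) : ℂ))) *
        (starRingEnd ℂ) (φ (y - x))) ∧
    V (x, ξ) = ((2 * Real.pi) ^ (-(d : ℝ) / 2) : ℝ) * u g

lemma theta_ge_one (d : ℕ) (σ : ℝ)
    (z : EuclideanSpace ℝ (Fin d) × EuclideanSpace ℝ (Fin d)) : 1 ≤ theta d σ z := by
  have h1 : (0:ℝ) ≤ ‖z.1‖ := norm_nonneg _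
  have h2 : (0:ℝ) ≤ ‖z.2‖ ^ (1/σ) := Real.rpow_nonneg (norm_nonneg _) _
  unfold theta; linarith

lemma add_rpow_le (a b t : ℝ) (ha : 0 ≤ a) (hb : 0 ≤ b) (ht : 0 ≤ t) :
    (a + b) ^ t ≤ 2 ^ t * (a ^ t + b ^ t) := by
  have hmax : (0:ℝ) ≤ max a b := le_trans ha (le_max_left a b)
  have h1 : (a + b) ^ t ≤ (2 * max a b) ^ t := by
    apply Real.rpow_le_rpow (by linarith) _ ht
    rcases le_total a b with h | h
    · rw [max_eq_right h]; linarith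
    · rw [max_eq_left h]; linarith
  have h2 : (2 * max a b) ^ t = 2 ^ t * (max a b) ^ t :=
    Real.mul_rpow (by norm_num) hmax
  have h3 : (max a b) ^ t ≤ a ^ t + b ^ t := by
    rcases le_total a b with h | h
    · rw [max_eq_right h]
      have : (0:ℝ) ≤ a ^ t := Real.rpow_nonneg ha _
      linarith
    · rw [max_eq_left h]
      have : (0:ℝ) ≤ b ^ t := Real.rpow_nonneg hb _
      linarith
  calc (a + b) ^ t ≤ 2 ^ t * (max a b) ^ t := h2 ▸ h1
    _ ≤ 2 ^ t * (a ^ t + b ^ t) :=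
        mul_le_mul_of_nonneg_left h3 (Real.rpow_nonneg (by norm_num) _)

/-- Key estimate: if `w'` lies in the `ε`-neighborhood of `w`, then
`θ(w') ≤ K θ(w)` with `K = 1 + ε + 2^{1/σ}(1 + ε^{1/σ})`. -/
lemma theta_comp (d : ℕ) (σ ρ ε : ℝ) (hσ : 0 < σ) (hρ0 : 0 < ρ) (hρ1 : ρ ≤ 1)
    (hε : 0 < ε)
    (w w' : EuclideanSpace ℝ (Fin d) × EuclideanSpace ℝ (Fin d))
    (h1 : ‖w'.1 - w.1‖ ≤ ε * theta d σ w ^ ρ)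
    (h2 : ‖w'.2 - w.2‖ ≤ ε * theta d σ w ^ (ρ * σ)) :
    theta d σ w' ≤ (1 + ε + 2 ^ (1/σ) * (1 + ε ^ (1/σ))) * theta d σ w := by
  set θ := theta d σ w with hθdef
  have hθ1 : 1 ≤ θ := theta_ge_one d σ w
  have hθ0 : (0:ℝ) < θ := lt_of_lt_of_le one_pos hθ1
  have ht : (0:ℝ) ≤ 1/σ := by positivity
  -- bound the x-component
  have hx : ‖w'.1‖ ≤ ‖w.1‖ + ε * θ := by
    have hθρ : θ ^ ρ ≤ θ ^ (1:ℝ) := Real.rpow_le_rpow_of_exponent_le hθ1 hρ1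
    rw [Real.rpow_one] at hθρ
    nlinarith [norm_sub_norm_le w'.1 w.1]
  -- bound the ξ-component
  have hξ : ‖w'.2‖ ≤ ‖w.2‖ + ε * θ ^ (ρ * σ) := by
    nlinarith [norm_sub_norm_le w'.2 w.2]
  have hξ2 : ‖w'.2‖ ^ (1/σ) ≤ 2 ^ (1/σ) * (‖w.2‖ ^ (1/σ) + ε ^ (1/σ) * θ) := by
    have hεθ : (0:ℝ) ≤ ε * θ ^ (ρ * σ) := by positivity
    have step1 : ‖w'.2‖ ^ (1/σ) ≤ (‖w.2‖ + ε * θ ^ (ρ * σ)) ^ (1/σ) :=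
      Real.rpow_le_rpow (norm_nonneg _) hξ ht
    have step2 : (‖w.2‖ + ε * θ ^ (ρ * σ)) ^ (1/σ) ≤
        2 ^ (1/σ) * (‖w.2‖ ^ (1/σ) + (ε * θ ^ (ρ * σ)) ^ (1/σ)) :=
      add_rpow_le _ _ _ (norm_nonneg _) hεθ ht
    have step3 : (ε * θ ^ (ρ * σ)) ^ (1/σ) ≤ ε ^ (1/σ) * θ := by
      rw [Real.mul_rpow hε.le (by positivity), ← Real.rpow_mul hθ0.le]
      have hexp : ρ * σ * (1/σ) = ρ := by field_simp
      rw [hexp]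
      have hθρ : θ ^ ρ ≤ θ ^ (1:ℝ) := Real.rpow_le_rpow_of_exponent_le hθ1 hρ1
      rw [Real.rpow_one] at hθρ
      have : (0:ℝ) ≤ ε ^ (1/σ) := Real.rpow_nonneg hε.le _
      nlinarith
    have h2pos : (0:ℝ) ≤ 2 ^ (1/σ) := Real.rpow_nonneg (by norm_num) _
    nlinarith
  have hw2θ : ‖w.2‖ ^ (1/σ) ≤ θ := by
    have : θ = 1 + ‖w.1‖ + ‖w.2‖ ^ (1/σ) := rfl
    have h := norm_nonneg w.1
    linarith
  have hw1θ : 1 + ‖w.1‖ ≤ θ := by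
    have : θ = 1 + ‖w.1‖ + ‖w.2‖ ^ (1/σ) := rfl
    have h := Real.rpow_nonneg (norm_nonneg w.2) (1/σ)
    linarith
  have h2pos : (0:ℝ) ≤ 2 ^ (1/σ) := Real.rpow_nonneg (by norm_num) _
  have : theta d σ w' = 1 + ‖w'.1‖ + ‖w'.2‖ ^ (1/σ) := rfl
  nlinarith

/-- for `ε < γ` there is `μ₀ > 0` such that `(Ω_{ρ,ε})_{ρ,μ} ⊆ Ω_{ρ,γ}`
for all `0 < μ ≤ μ₀`. -/
theorem stmt4 (d : ℕ) (σ ρ ε γ : ℝ)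
    (Ω : Set (EuclideanSpace ℝ (Fin d) × EuclideanSpace ℝ (Fin d))) (hΩ : Ω.Nonempty)
    (hσ : 0 < σ) (hρ0 : 0 < ρ) (hρ1 : ρ ≤ 1) (hε : 0 < ε) (hεγ : ε < γ) :
    ∃ μ₀ > 0, ∀ μ : ℝ, 0 < μ → μ ≤ μ₀ →
      aniso d σ ρ μ (aniso d σ ρ ε Ω) ⊆ aniso d σ ρ γ Ω := by
  set K : ℝ := 1 + ε + 2 ^ (1/σ) * (1 + ε ^ (1/σ)) with hKdef
  have h2pos : (0:ℝ) ≤ 2 ^ (1/σ) := Real.rpow_nonneg (by norm_num) _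
  have hεσ : (0:ℝ) ≤ ε ^ (1/σ) := Real.rpow_nonneg hε.le _
  have hK1 : (1:ℝ) ≤ K := by
    have : (0:ℝ) ≤ 2 ^ (1/σ) * (1 + ε ^ (1/σ)) := mul_nonneg h2pos (by linarith)
    rw [hKdef]; linarith
  have hK0 : (0:ℝ) < K := lt_of_lt_of_le one_pos hK1
  set M : ℝ := K ^ (1 + σ) with hMdef
  have hM0 : (0:ℝ) < M := Real.rpow_pos_of_pos hK0 _
  refine ⟨(γ - ε) / M, div_pos (by linarith) hM0, ?_⟩
  intro μ hμ0 hμM z hz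
  obtain ⟨w', ⟨w, hwΩ, hw1, hw2⟩, hz1, hz2⟩ := hz
  have hθ1 : 1 ≤ theta d σ w := theta_ge_one d σ w
  have hθ0 : (0:ℝ) < theta d σ w := lt_of_lt_of_le one_pos hθ1
  have hθ'0 : (0:ℝ) < theta d σ w' := lt_of_lt_of_le one_pos (theta_ge_one d σ w')
  have hcomp : theta d σ w' ≤ K * theta d σ w :=
    theta_comp d σ ρ ε hσ hρ0 hρ1 hε w w' hw1.le hw2.le
  have hμM' : μ * M ≤ γ - ε := by
    calc μ * M ≤ ((γ - ε) / M) * M := mul_le_mul_of_nonneg_right hμM hM0.le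
      _ = γ - ε := div_mul_cancel₀ _ hM0.ne'
  have hKρ : K ^ ρ ≤ M := Real.rpow_le_rpow_of_exponent_le hK1 (by linarith)
  have hKρσ : K ^ (ρ * σ) ≤ M :=
    Real.rpow_le_rpow_of_exponent_le hK1 (by nlinarith)
  refine ⟨w, hwΩ, ?_, ?_⟩
  · -- x-component
    have hθρ : (0:ℝ) < theta d σ w ^ ρ := Real.rpow_pos_of_pos hθ0 ρ
    have hpow : theta d σ w' ^ ρ ≤ M * theta d σ w ^ ρ := by
      calc theta d σ w' ^ ρ ≤ (K * theta d σ w) ^ ρ :=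
            Real.rpow_le_rpow hθ'0.le hcomp hρ0.le
        _ = K ^ ρ * theta d σ w ^ ρ := Real.mul_rpow hK0.le hθ0.le
        _ ≤ M * theta d σ w ^ ρ := mul_le_mul_of_nonneg_right hKρ hθρ.le
    have htri : ‖z.1 - w.1‖ ≤ ‖z.1 - w'.1‖ + ‖w'.1 - w.1‖ :=
      norm_sub_le_norm_sub_add_norm_sub z.1 w'.1 w.1
    have hkey : μ * theta d σ w' ^ ρ ≤ (γ - ε) * theta d σ w ^ ρ := by
      calc μ * theta d σ w' ^ ρ ≤ μ * (M * theta d σ w ^ ρ) :=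
            mul_le_mul_of_nonneg_left hpow hμ0.le
        _ = (μ * M) * theta d σ w ^ ρ := by ring
        _ ≤ (γ - ε) * theta d σ w ^ ρ := mul_le_mul_of_nonneg_right hμM' hθρ.le
    calc ‖z.1 - w.1‖ ≤ ‖z.1 - w'.1‖ + ‖w'.1 - w.1‖ := htri
      _ < μ * theta d σ w' ^ ρ + ε * theta d σ w ^ ρ := by linarith
      _ ≤ γ * theta d σ w ^ ρ := by nlinarith
  · -- ξ-component
    have hθρ : (0:ℝ) < theta d σ w ^ (ρ * σ) := Real.rpow_pos_of_pos hθ0 _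
    have hpow : theta d σ w' ^ (ρ * σ) ≤ M * theta d σ w ^ (ρ * σ) := by
      calc theta d σ w' ^ (ρ * σ) ≤ (K * theta d σ w) ^ (ρ * σ) :=
            Real.rpow_le_rpow hθ'0.le hcomp (by positivity)
        _ = K ^ (ρ * σ) * theta d σ w ^ (ρ * σ) := Real.mul_rpow hK0.le hθ0.le
        _ ≤ M * theta d σ w ^ (ρ * σ) := mul_le_mul_of_nonneg_right hKρσ hθρ.le
    have htri : ‖z.2 - w.2‖ ≤ ‖z.2 - w'.2‖ + ‖w'.2 - w.2‖ :=
      norm_sub_le_norm_sub_add_norm_sub z.2 w'.2 w.2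
    have hkey : μ * theta d σ w' ^ (ρ * σ) ≤ (γ - ε) * theta d σ w ^ (ρ * σ) := by
      calc μ * theta d σ w' ^ (ρ * σ) ≤ μ * (M * theta d σ w ^ (ρ * σ)) :=
            mul_le_mul_of_nonneg_left hpow hμ0.le
        _ = (μ * M) * theta d σ w ^ (ρ * σ) := by ring
        _ ≤ (γ - ε) * theta d σ w ^ (ρ * σ) := mul_le_mul_of_nonneg_right hμM' hθρ.le
    calc ‖z.2 - w.2‖ ≤ ‖z.2 - w'.2‖ + ‖w'.2 - w.2‖ := htri
      _ < μ * theta d σ w' ^ (ρ * σ) + ε * theta d σ w ^ (ρ * σ) := by linarith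
      _ ≤ γ * theta d σ w ^ (ρ * σ) := by nlinarith
end

section
/- Let σ > 0, 0 < ρ ≤ 1, let ∅ ≠ Ω ⊆ ℝ^d × ℝ^d be Lebesgue measurable, let δ > 0, and let Φ be a Schwartz function on ℝ^d × ℝ^d. Then for every N ≥ 0 one has sup_{w ∈ (ℝ^d × ℝ^d) \ Ω_{ρ,δ}} ⟨w⟩^N ∫_Ω |Φ(z − w)| dz < ∞. -/
open scoped Real

variable {d : ℕ}

open MeasureTheory

noncomputable instance volRightInv {d : ℕ} :
    (volume : Measure (EuclideanSpace ℝ (Fin d) × EuclideanSpace ℝ (Fin d))).IsAddRightInvariant :=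
  Measure.prod.instIsAddRightInvariant

noncomputable instance volHaar {d : ℕ} :
    (volume : Measure (EuclideanSpace ℝ (Fin d) × EuclideanSpace ℝ (Fin d))).IsAddHaarMeasure :=
  Measure.prod.instIsAddHaarMeasure _ _

lemma one_le_theta (σ : ℝ) (z : EuclideanSpace ℝ (Fin d) × EuclideanSpace ℝ (Fin d)) :
    1 ≤ theta d σ z := by
  have h1 := norm_nonneg z.1
  have h2 := Real.rpow_nonneg (norm_nonneg z.2) (1 / σ)
  unfold theta; linarith

lemma one_le_pairBracket (z : EuclideanSpace ℝ (Fin d) × EuclideanSpace ℝ (Fin d)) :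
    1 ≤ pairBracket z := by
  rw [show (1:ℝ) = Real.sqrt 1 by simp]
  exact Real.sqrt_le_sqrt (by nlinarith [sq_nonneg ‖z.1‖, sq_nonneg ‖z.2‖])

lemma pairNorm_le_pairBracket (z : EuclideanSpace ℝ (Fin d) × EuclideanSpace ℝ (Fin d)) :
    pairNorm z ≤ pairBracket z :=
  Real.sqrt_le_sqrt (by linarith)

lemma norm_fst_le_pairNorm (z : EuclideanSpace ℝ (Fin d) × EuclideanSpace ℝ (Fin d)) :
    ‖z.1‖ ≤ pairNorm z := by
  calc ‖z.1‖ = Real.sqrt (‖z.1‖ ^ 2) := (Real.sqrt_sq (norm_nonneg _)).symm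
  _ ≤ _ := Real.sqrt_le_sqrt (by nlinarith [sq_nonneg ‖z.2‖])

lemma norm_snd_le_pairNorm (z : EuclideanSpace ℝ (Fin d) × EuclideanSpace ℝ (Fin d)) :
    ‖z.2‖ ≤ pairNorm z := by
  calc ‖z.2‖ = Real.sqrt (‖z.2‖ ^ 2) := (Real.sqrt_sq (norm_nonneg _)).symm
  _ ≤ _ := Real.sqrt_le_sqrt (by nlinarith [sq_nonneg ‖z.1‖])

lemma pairBracket_le (z : EuclideanSpace ℝ (Fin d) × EuclideanSpace ℝ (Fin d)) :
    pairBracket z ≤ 1 + ‖z.1‖ + ‖z.2‖ := by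
  rw [show (1 + ‖z.1‖ + ‖z.2‖ : ℝ) = Real.sqrt ((1 + ‖z.1‖ + ‖z.2‖) ^ 2) from
    (Real.sqrt_sq (by positivity)).symm]
  apply Real.sqrt_le_sqrt
  nlinarith [norm_nonneg z.1, norm_nonneg z.2, mul_nonneg (norm_nonneg z.1) (norm_nonneg z.2)]

lemma continuous_pairBracket :
    Continuous (fun z : EuclideanSpace ℝ (Fin d) × EuclideanSpace ℝ (Fin d) => pairBracket z) := by
  unfold pairBracket; fun_prop

lemma g0_integrable (Φ : SchwartzMap (EuclideanSpace ℝ (Fin d) × EuclideanSpace ℝ (Fin d)) ℂ)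
    (K : ℕ) : Integrable (fun u => pairBracket u ^ K * ‖Φ u‖) := by
  have hcont : Continuous (fun u : EuclideanSpace ℝ (Fin d) × EuclideanSpace ℝ (Fin d) =>
      pairBracket u ^ K * ‖Φ u‖) :=
    (continuous_pairBracket.pow K).mul Φ.continuous.norm
  refine Integrable.mono'
    (g := fun u => (3:ℝ) ^ K * ‖Φ u‖ + (3:ℝ) ^ K * (‖u‖ ^ K * ‖Φ u‖))
    ((Φ.integrable.norm.const_mul _).add ((Φ.integrable_pow_mul volume K).const_mul _))
    hcont.aestronglyMeasurable ?_
  filter_upwards with u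
  have hb0 : 0 ≤ pairBracket u := le_trans zero_le_one (one_le_pairBracket u)
  rw [Real.norm_of_nonneg (by positivity)]
  have h1 : pairBracket u ≤ 3 * max 1 ‖u‖ := by
    have := pairBracket_le u
    have h2 : ‖u.1‖ ≤ ‖u‖ := norm_fst_le u
    have h3 : ‖u.2‖ ≤ ‖u‖ := norm_snd_le u
    have h4 : (1:ℝ) ≤ max 1 ‖u‖ := le_max_left _ _
    have h5 : ‖u‖ ≤ max 1 ‖u‖ := le_max_right _ _
    linarith
  have h2 : pairBracket u ^ K ≤ 3 ^ K * (1 + ‖u‖ ^ K) := by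
    calc pairBracket u ^ K ≤ (3 * max 1 ‖u‖) ^ K := pow_le_pow_left₀ hb0 h1 K
    _ = 3 ^ K * (max 1 ‖u‖) ^ K := mul_pow _ _ _
    _ ≤ 3 ^ K * (1 + ‖u‖ ^ K) := by
        have : (max 1 ‖u‖) ^ K ≤ 1 + ‖u‖ ^ K := by
          rcases max_cases (1:ℝ) ‖u‖ with ⟨h, _⟩ | ⟨h, _⟩ <;> rw [h]
          · simp [pow_nonneg (norm_nonneg u) K]
          · nlinarith [pow_nonneg (norm_nonneg u) K]
        have h3K : (0:ℝ) ≤ 3 ^ K := by positivity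
        nlinarith
  have hΦ0 : (0:ℝ) ≤ ‖Φ u‖ := norm_nonneg _
  nlinarith [mul_le_mul_of_nonneg_right h2 hΦ0]

set_option maxHeartbeats 1000000 in
/-- super-polynomial decay, off an anisotropic neighborhood of `Ω`, of the
convolution of a Schwartz function with the indicator of `Ω`. -/
theorem stmt11 (d : ℕ) (σ ρ δ : ℝ) (hσ : 0 < σ) (hρ0 : 0 < ρ) (hρ1 : ρ ≤ 1) (hδ : 0 < δ)
    (Ω : Set (EuclideanSpace ℝ (Fin d) × EuclideanSpace ℝ (Fin d))) (hΩ : Ω.Nonempty)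
    (hmeas : MeasurableSet Ω)
    (Φ : SchwartzMap (EuclideanSpace ℝ (Fin d) × EuclideanSpace ℝ (Fin d)) ℂ) :
    ∀ N : ℝ, 0 ≤ N → ∃ M : ℝ, ∀ w ∉ aniso d σ ρ δ Ω,
      pairBracket w ^ N * (∫ z in Ω, ‖Φ (z - w)‖) ≤ M := by
  intro N hN
  set m : ℝ := min 1 σ with hmdef
  have hm0 : 0 < m := lt_min one_pos hσ
  have hρm : 0 < ρ * m := mul_pos hρ0 hm0
  set Mx : ℝ := max 1 σ with hMxdef
  have hMx0 : 0 < Mx := lt_of_lt_of_le one_pos (le_max_left _ _)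
  set e : ℝ := Mx / (ρ * m) with hedef
  have he0 : 0 < e := div_pos hMx0 hρm
  set K : ℕ := ⌈(1 + e) * N⌉₊ with hKdef
  have hδe : (0:ℝ) < 4 * δ ^ (-e) := by positivity
  set A : ℝ := (4 * δ ^ (-e)) ^ N with hAdef
  have hA0 : 0 < A := Real.rpow_pos_of_pos hδe N
  have hg0int : Integrable (fun u => pairBracket u ^ K * ‖Φ u‖) := g0_integrable Φ K
  refine ⟨A * ∫ u, pairBracket u ^ K * ‖Φ u‖, ?_⟩
  intro w hw
  have key : ∀ z ∈ Ω, pairBracket w ^ N ≤ A * pairBracket (z - w) ^ K := by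
    intro z hz
    have hθ1 : 1 ≤ theta d σ z := one_le_theta σ z
    have hθ0 : (0:ℝ) < theta d σ z := lt_of_lt_of_le one_pos hθ1
    set θ := theta d σ z with hθdef
    set B := pairBracket (z - w) with hBdef
    have hB1 : 1 ≤ B := one_le_pairBracket _
    have hB0 : (0:ℝ) < B := lt_of_lt_of_le one_pos hB1
    set P := pairNorm (z - w) with hPdef
    have hPB : P ≤ B := pairNorm_le_pairBracket _
    have hP1 : ‖(z - w).1‖ ≤ P := norm_fst_le_pairNorm _
    have hP2 : ‖(z - w).2‖ ≤ P := norm_snd_le_pairNorm _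
    have hoff : δ * θ ^ (ρ * m) ≤ P := by
      have hnot : ¬ (‖w.1 - z.1‖ < δ * θ ^ ρ ∧ ‖w.2 - z.2‖ < δ * θ ^ (ρ * σ)) := by
        intro hcon; exact hw ⟨z, hz, hcon.1, hcon.2⟩
      have e1 : θ ^ (ρ * m) ≤ θ ^ ρ :=
        Real.rpow_le_rpow_of_exponent_le hθ1 (by nlinarith [min_le_left (1:ℝ) σ])
      have e2 : θ ^ (ρ * m) ≤ θ ^ (ρ * σ) :=
        Real.rpow_le_rpow_of_exponent_le hθ1 (by nlinarith [min_le_right (1:ℝ) σ])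
      rcases not_and_or.mp hnot with h | h
      · push_neg at h
        calc δ * θ ^ (ρ * m) ≤ δ * θ ^ ρ := by nlinarith
        _ ≤ ‖w.1 - z.1‖ := h
        _ = ‖(z - w).1‖ := by rw [Prod.fst_sub, norm_sub_rev]
        _ ≤ P := hP1
      · push_neg at h
        calc δ * θ ^ (ρ * m) ≤ δ * θ ^ (ρ * σ) := by nlinarith
        _ ≤ ‖w.2 - z.2‖ := h
        _ = ‖(z - w).2‖ := by rw [Prod.snd_sub, norm_sub_rev]
        _ ≤ P := hP2
    have h1 : pairBracket w ≤ 4 * (θ ^ Mx * B) := by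
      have a1 : pairBracket w ≤ 1 + ‖w.1‖ + ‖w.2‖ := pairBracket_le _
      have a2 : ‖w.1‖ - ‖z.1‖ ≤ ‖w.1 - z.1‖ := norm_sub_norm_le _ _
      have a2' : ‖w.1 - z.1‖ = ‖(z - w).1‖ := by rw [Prod.fst_sub, norm_sub_rev]
      have a3 : ‖w.2‖ - ‖z.2‖ ≤ ‖w.2 - z.2‖ := norm_sub_norm_le _ _
      have a3' : ‖w.2 - z.2‖ = ‖(z - w).2‖ := by rw [Prod.snd_sub, norm_sub_rev]
      have c1 : 1 + ‖z.1‖ + ‖z.2‖ ≤ 2 * θ ^ Mx := by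
        have d1 : 1 + ‖z.1‖ ≤ θ := by
          have := Real.rpow_nonneg (norm_nonneg z.2) (1 / σ)
          rw [hθdef]; unfold theta; linarith
        have d2 : ‖z.2‖ ≤ θ ^ σ := by
          have key2 : (‖z.2‖ ^ (1/σ)) ^ σ = ‖z.2‖ := by
            rw [← Real.rpow_mul (norm_nonneg _), one_div_mul_cancel hσ.ne', Real.rpow_one]
          have hle : ‖z.2‖ ^ (1/σ) ≤ θ := by
            rw [hθdef]; unfold theta; linarith [norm_nonneg z.1]
          calc ‖z.2‖ = (‖z.2‖ ^ (1/σ)) ^ σ := key2.symm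
          _ ≤ θ ^ σ := Real.rpow_le_rpow (Real.rpow_nonneg (norm_nonneg _) _) hle hσ.le
        have d3 : θ ≤ θ ^ Mx := by
          calc θ = θ ^ (1:ℝ) := (Real.rpow_one θ).symm
          _ ≤ θ ^ Mx := Real.rpow_le_rpow_of_exponent_le hθ1 (le_max_left _ _)
        have d4 : θ ^ σ ≤ θ ^ Mx := Real.rpow_le_rpow_of_exponent_le hθ1 (le_max_right _ _)
        linarith
      have hθMx1 : 1 ≤ θ ^ Mx := by
        calc (1:ℝ) = θ ^ (0:ℝ) := (Real.rpow_zero θ).symm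
        _ ≤ θ ^ Mx := Real.rpow_le_rpow_of_exponent_le hθ1 hMx0.le
      nlinarith [mul_nonneg (sub_nonneg.mpr hθMx1) (sub_nonneg.mpr hB1),
        mul_nonneg (sub_nonneg.mpr hθMx1) hB0.le]
    have h2 : θ ^ Mx ≤ δ ^ (-e) * B ^ e := by
      have s1 : θ ^ (ρ * m) ≤ B / δ := by
        rw [le_div_iff₀ hδ]; nlinarith
      have s2 : θ ^ Mx = (θ ^ (ρ * m)) ^ e := by
        rw [← Real.rpow_mul hθ0.le]
        congr 1
        rw [hedef]; field_simp
      rw [s2]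
      calc (θ ^ (ρ * m)) ^ e ≤ (B / δ) ^ e :=
        Real.rpow_le_rpow (Real.rpow_nonneg hθ0.le _) s1 he0.le
      _ = δ ^ (-e) * B ^ e := by
          rw [Real.div_rpow hB0.le hδ.le, Real.rpow_neg hδ.le]; ring
    have h3 : pairBracket w ≤ 4 * δ ^ (-e) * B ^ (1 + e) := by
      have hspl : B ^ (1 + e) = B * B ^ e := by
        rw [Real.rpow_add hB0, Real.rpow_one]
      rw [hspl]
      calc pairBracket w ≤ 4 * (θ ^ Mx * B) := h1
      _ ≤ 4 * ((δ ^ (-e) * B ^ e) * B) := by nlinarith [mul_le_mul_of_nonneg_right h2 hB0.le]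
      _ = 4 * δ ^ (-e) * (B * B ^ e) := by ring
    have hbw0 : (0:ℝ) ≤ pairBracket w := le_trans zero_le_one (one_le_pairBracket w)
    have h4 : pairBracket w ^ N ≤ A * B ^ ((1 + e) * N) := by
      calc pairBracket w ^ N ≤ (4 * δ ^ (-e) * B ^ (1 + e)) ^ N := Real.rpow_le_rpow hbw0 h3 hN
      _ = A * (B ^ (1 + e)) ^ N := Real.mul_rpow hδe.le (Real.rpow_nonneg hB0.le _)
      _ = A * B ^ ((1 + e) * N) := by rw [← Real.rpow_mul hB0.le]
    have h5 : B ^ ((1 + e) * N) ≤ B ^ K := by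
      have := Real.rpow_le_rpow_of_exponent_le hB1 (Nat.le_ceil ((1 + e) * N))
      rwa [Real.rpow_natCast] at this
    calc pairBracket w ^ N ≤ A * B ^ ((1 + e) * N) := h4
    _ ≤ A * B ^ K := by nlinarith
  have hΦint : IntegrableOn (fun z => ‖Φ (z - w)‖) Ω :=
    (Φ.integrable.norm.comp_sub_right w).integrableOn
  have hgint : Integrable (fun z => pairBracket (z - w) ^ K * ‖Φ (z - w)‖) :=
    hg0int.comp_sub_right w
  calc pairBracket w ^ N * ∫ z in Ω, ‖Φ (z - w)‖
      = ∫ z in Ω, pairBracket w ^ N * ‖Φ (z - w)‖ := (integral_const_mul _ _).symm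
  _ ≤ ∫ z in Ω, A * (pairBracket (z - w) ^ K * ‖Φ (z - w)‖) := by
      refine setIntegral_mono_on (hΦint.const_mul _) (hgint.integrableOn.const_mul _) hmeas ?_
      intro z hz
      have hk := key z hz
      have h0 : (0:ℝ) ≤ ‖Φ (z - w)‖ := norm_nonneg _
      calc pairBracket w ^ N * ‖Φ (z - w)‖
          ≤ (A * pairBracket (z - w) ^ K) * ‖Φ (z - w)‖ := mul_le_mul_of_nonneg_right hk h0
      _ = _ := by ring
  _ = A * ∫ z in Ω, pairBracket (z - w) ^ K * ‖Φ (z - w)‖ := integral_const_mul _ _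
  _ ≤ A * ∫ z, pairBracket (z - w) ^ K * ‖Φ (z - w)‖ := by
      refine mul_le_mul_of_nonneg_left (setIntegral_le_integral hgint ?_) hA0.le
      filter_upwards with z
      have : (0:ℝ) ≤ pairBracket (z - w) := le_trans zero_le_one (one_le_pairBracket _)
      positivity
  _ = A * ∫ u, pairBracket u ^ K * ‖Φ u‖ := by
      rw [integral_sub_right_eq_self (fun u => pairBracket u ^ K * ‖Φ u‖) w]
end
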